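/- Let V be a finite-dimensional real vector space and B a symmetric bilinear form on V. Suppose there exists e ∈ V with B(e,e) > 0 such that B(v,v) < 0 for every nonzero v with B(e,v) = 0. If x, y ∈ V are both nonzero and satisfy B(x,x) ≥ 0, B(y,y) ≥ 0 and B(x,y) = 0, then B(x,x) = 0, B(y,y) = 0 and B(x + y, x + y) = 0. -/

import Mathlib

/-- Hodge-index contradiction step: with `B` of signature `(1, dim V - 1)` as witnessed
by `e`, if `x, y` are nonzero with `B x x ≥ 0`, `B y y ≥ 0` and `B x y = 0`, then
`B x x = 0`, `B y y = 0` and `B (x+y) (x+y) = 0`. -/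
theorem hodge_index_isotropic
    (V : Type*) [AddCommGroup V] [Module ℝ V] [FiniteDimensional ℝ V]
    (B : LinearMap.BilinForm ℝ V) (hsymm : ∀ u v : V, B u v = B v u)
    (e : V) (he : 0 < B e e)
    (hneg : ∀ v : V, v ≠ 0 → B e v = 0 → B v v < 0)
    (x y : V) (hx0 : x ≠ 0) (hy0 : y ≠ 0)
    (hx : 0 ≤ B x x) (hy : 0 ≤ B y y) (hxy : B x y = 0) :
    B x x = 0 ∧ B y y = 0 ∧ B (x + y) (x + y) = 0 := by
  have key : ∀ u w : V, u ≠ 0 → w ≠ 0 → 0 ≤ B u u → 0 ≤ B w w → B u w = 0 → B u u = 0 := by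
    intro u w hu hw huu hww huw
    by_contra h
    have huu' : 0 < B u u := lt_of_le_of_ne huu (Ne.symm h)
    have heu : B e u ≠ 0 := fun h0 => absurd (hneg u hu h0) (not_lt.mpr huu)
    set a : ℝ := -(B e w) / (B e u) with ha
    have hv : B e (a • u + w) = 0 := by
      have : B e (a • u + w) = a * B e u + B e w := by
        simp [map_add, map_smul, smul_eq_mul]
      rw [this, ha]
      field_simp
      ring
    have hvne : a • u + w ≠ 0 := by
      intro h0
      have hw' : w = -(a • u) := by
        rw [eq_neg_iff_add_eq_zero, add_comm]; exact h0
      have : B u w = -(a * B u u) := by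
        rw [hw']; simp [map_smul, smul_eq_mul]
      rw [huw] at this
      have ha0 : a = 0 := by
        have := this.symm
        rcases mul_eq_zero.mp (by linarith : a * B u u = 0) with h1 | h2
        · exact h1
        · exact absurd h2 (ne_of_gt huu')
      rw [ha0] at hw'
      simp at hw'
      exact hw hw'
    have hlt := hneg _ hvne hv
    have hsq : B (a • u + w) (a • u + w) = a * a * B u u + B w w := by
      have hwu : B w u = 0 := by rw [hsymm]; exact huw
      simp [map_add, map_smul, LinearMap.add_apply, LinearMap.smul_apply,
        smul_eq_mul, huw, hwu]
      ring
    rw [hsq] at hlt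
    nlinarith [mul_self_nonneg a]
  have hxx : B x x = 0 := key x y hx0 hy0 hx hy hxy
  have hyy : B y y = 0 := key y x hy0 hx0 hy hx (by rw [hsymm]; exact hxy)
  refine ⟨hxx, hyy, ?_⟩
  have hyx : B y x = 0 := by rw [hsymm]; exact hxy
  simp [map_add, LinearMap.add_apply, hxx, hyy, hxy, hyx]
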